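/- arXiv:2405.13986 — 2 statements merged into one kernel-verified Lean document; each statement's English description precedes it below -/
import Mathlib

section
/- For a function u : ℝ² → ℝ that is C⁶ in a neighborhood of (x,y), the 9-point Mehrstellen box stencil satisfies (1/(6h²))·(20·u(x,y) − 4·(u(x±h,y)+u(x,y±h)) − (u(x±h,y±h))) = −Δu(x,y) − (h²/12)·Δ²u(x,y) + O(h⁴), where Δ² denotes the biharmonic operator. -/
/-- The Laplacian `Δu = u_xx + u_yy` via iterated coordinate derivatives. -/
noncomputable def lap2 (u : ℝ → ℝ → ℝ) (x y : ℝ) : ℝ :=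
  iteratedDeriv 2 (fun t => u t y) x + iteratedDeriv 2 (fun t => u x t) y

/-- The biharmonic operator `Δ²u = u_xxxx + 2 u_xxyy + u_yyyy`. -/
noncomputable def bilap2 (u : ℝ → ℝ → ℝ) (x y : ℝ) : ℝ :=
  iteratedDeriv 4 (fun t => u t y) x
    + 2 * iteratedDeriv 2 (fun s => iteratedDeriv 2 (fun t => u t s) x) y
    + iteratedDeriv 4 (fun t => u x t) y

/-!
With `δ²` the central second difference of step `h`, the box stencil equals
`-6 (δ²ₓ u + δ²ᵧ u) - δ²ₓ δ²ᵧ u`. For a `C⁶` function of one variable, Taylor's theorem with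
Lagrange remainder on both sides of `a` gives `δ² g(a) = h² g''(a) + h⁴/12 g⁗(a) + O(h⁶)`,
which handles the first two terms. For the mixed term, expand `s ↦ δ²ᵧ u(s, ·)` to sixth order
in `s`: its second and fourth derivatives at `x` are `δ²ᵧ u_xx = h² u_xxyy + O(h⁴)` and
`δ²ᵧ u_xxxx = O(h²)`, so `δ²ₓ δ²ᵧ u = h⁴ u_xxyy + O(h⁶)`. All constants are bounds of partial
derivatives of order `≤ 6` on a compact ball; these partial derivatives are continuous because,
along coordinate lines, they are values of `iteratedFDeriv` of the uncurried function.
-/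

open Set Metric Filter Topology Finset Function
open scoped Nat

theorem abs_sub_taylor_le {f : ℝ → ℝ} {a b M : ℝ} {n : ℕ}
    (hf : ∀ t ∈ uIcc a b, ContDiffAt ℝ (n + 1) f t)
    (hM : ∀ t ∈ uIcc a b, |iteratedDeriv (n + 1) f t| ≤ M) :
    |f b - ∑ k ∈ range (n + 1), iteratedDeriv k f a * (b - a) ^ k / k !|
      ≤ M * |b - a| ^ (n + 1) / (n + 1)! := by
  rcases eq_or_ne a b with rfl | hab
  · simp [sum_range_succ']
  obtain ⟨ξ, hξ, hrem⟩ := taylor_mean_remainder_lagrange_iteratedDeriv hab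
    fun t ht => (hf t ht).contDiffWithinAt
  have hpoly : taylorWithinEval f n (uIcc a b) a b
      = ∑ k ∈ range (n + 1), iteratedDeriv k f a * (b - a) ^ k / k ! := by
    rw [taylor_within_apply]
    refine sum_congr rfl fun k hk => ?_
    rw [iteratedDerivWithin_eq_iteratedDeriv (uniqueDiffOn_uIcc hab)
      ((hf a left_mem_uIcc).of_le (mod_cast (mem_range.1 hk).le)) left_mem_uIcc, smul_eq_mul]
    ring
  rw [← hpoly, hrem, abs_div, abs_mul, abs_pow, Nat.abs_cast]
  gcongr
  exact hM ξ (uIoo_subset_uIcc_self hξ)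

theorem abs_add_sub_taylor_le {f : ℝ → ℝ} {a h M : ℝ} {n : ℕ} (hh : 0 ≤ h)
    (hf : ∀ t ∈ closedBall a h, ContDiffAt ℝ (n + 1) f t)
    (hM : ∀ t ∈ closedBall a h, |iteratedDeriv (n + 1) f t| ≤ M) :
    |f (a + h) + f (a - h) - ∑ k ∈ range (n + 1), iteratedDeriv k f a * (h ^ k + (-h) ^ k) / k !|
      ≤ 2 * M * h ^ (n + 1) / (n + 1)! := by
  have hsub : ∀ b ∈ closedBall a h, uIcc a b ⊆ closedBall a h := fun b hb => by
    rw [Real.closedBall_eq_Icc] at hb ⊢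
    exact uIcc_subset_Icc ⟨by linarith, by linarith⟩ hb
  have taylor_at : ∀ b ∈ closedBall a h,
      |f b - ∑ k ∈ range (n + 1), iteratedDeriv k f a * (b - a) ^ k / k !|
        ≤ M * h ^ (n + 1) / (n + 1)! := fun b hb => by
    refine (abs_sub_taylor_le (fun t ht => hf t (hsub b hb ht))
      fun t ht => hM t (hsub b hb ht)).trans ?_
    gcongr
    · exact (abs_nonneg _).trans (hM a (mem_closedBall_self hh))
    · rwa [← Real.dist_eq]
  have hplus := taylor_at (a + h) (by simp [abs_of_nonneg hh])
  have hminus := taylor_at (a - h) (by simp [abs_of_nonneg hh])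
  rw [add_sub_cancel_left] at hplus
  rw [sub_sub_cancel_left] at hminus
  calc _ = |(f (a + h) - ∑ k ∈ range (n + 1), iteratedDeriv k f a * h ^ k / k !)
        + (f (a - h) - ∑ k ∈ range (n + 1), iteratedDeriv k f a * (-h) ^ k / k !)| := by
          simp only [mul_add, add_div, sum_add_distrib]
          ring_nf
    _ ≤ _ := (abs_add_le _ _).trans ((add_le_add hplus hminus).trans_eq (by ring))

def secondDiff (f : ℝ → ℝ) (a h : ℝ) : ℝ := f (a + h) + f (a - h) - 2 * f a

section SecondDiff

variable {f : ℝ → ℝ} {g : ℝ → ℝ → ℝ} {a h x M : ℝ}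

theorem secondDiff_nodes_mem_closedBall (hh : 0 ≤ h) :
    a + h ∈ closedBall a h ∧ a - h ∈ closedBall a h ∧ a ∈ closedBall a h := by
  simp [abs_of_nonneg hh, hh]

theorem abs_secondDiff_sub_sub_le_of_iteratedDeriv_six (hh : 0 ≤ h)
    (hf : ∀ t ∈ closedBall a h, ContDiffAt ℝ 6 f t)
    (hM : ∀ t ∈ closedBall a h, |iteratedDeriv 6 f t| ≤ M) :
    |secondDiff f a h - h ^ 2 * iteratedDeriv 2 f a - h ^ 4 / 12 * iteratedDeriv 4 f a|
      ≤ M * h ^ 6 / 360 := by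
  convert abs_add_sub_taylor_le (n := 5) hh hf hM using 1
  · simp only [secondDiff, sum_range_succ, sum_range_zero, Nat.factorial, iteratedDeriv_zero]
    ring_nf
  · norm_num [Nat.factorial]
    ring

theorem abs_secondDiff_sub_le_of_iteratedDeriv_four (hh : 0 ≤ h)
    (hf : ∀ t ∈ closedBall a h, ContDiffAt ℝ 4 f t)
    (hM : ∀ t ∈ closedBall a h, |iteratedDeriv 4 f t| ≤ M) :
    |secondDiff f a h - h ^ 2 * iteratedDeriv 2 f a| ≤ M * h ^ 4 / 12 := by
  convert abs_add_sub_taylor_le (n := 3) hh hf hM using 1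
  · simp only [secondDiff, sum_range_succ, sum_range_zero, Nat.factorial, iteratedDeriv_zero]
    ring_nf
  · norm_num [Nat.factorial]
    ring

theorem abs_secondDiff_le_of_iteratedDeriv_two (hh : 0 ≤ h)
    (hf : ∀ t ∈ closedBall a h, ContDiffAt ℝ 2 f t)
    (hM : ∀ t ∈ closedBall a h, |iteratedDeriv 2 f t| ≤ M) :
    |secondDiff f a h| ≤ M * h ^ 2 := by
  convert abs_add_sub_taylor_le (n := 1) hh hf hM using 1
  · simp only [secondDiff, sum_range_succ, sum_range_zero, Nat.factorial, iteratedDeriv_zero]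
    ring_nf
  · norm_num [Nat.factorial]
    ring

theorem contDiffAt_secondDiff {n : WithTop ℕ∞} (hh : 0 ≤ h)
    (hg : ∀ t ∈ closedBall a h, ContDiffAt ℝ n (fun s => g s t) x) :
    ContDiffAt ℝ n (fun s => secondDiff (g s) a h) x := by
  obtain ⟨hp, hm, hc⟩ := secondDiff_nodes_mem_closedBall (a := a) hh
  exact ((hg _ hp).add (hg _ hm)).sub (contDiffAt_const.mul (hg _ hc))

theorem iteratedDeriv_secondDiff {k : ℕ} (hh : 0 ≤ h)
    (hg : ∀ t ∈ closedBall a h, ContDiffAt ℝ k (fun s => g s t) x) :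
    iteratedDeriv k (fun s => secondDiff (g s) a h) x
      = secondDiff (fun t => iteratedDeriv k (fun s => g s t) x) a h := by
  obtain ⟨hp, hm, hc⟩ := secondDiff_nodes_mem_closedBall (a := a) hh
  simp only [secondDiff]
  rw [iteratedDeriv_fun_sub ((hg _ hp).add (hg _ hm)) (contDiffAt_const.mul (hg _ hc)),
    iteratedDeriv_fun_add (hg _ hp) (hg _ hm), iteratedDeriv_const_mul_field]

theorem abs_secondDiff_le_four_mul (hh : 0 ≤ h)
    (hf : ∀ t ∈ closedBall a h, |f t| ≤ M) : |secondDiff f a h| ≤ 4 * M := by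
  obtain ⟨hp, hm, hc⟩ := secondDiff_nodes_mem_closedBall (a := a) hh
  have h1 := abs_le.1 (hf _ hp)
  have h2 := abs_le.1 (hf _ hm)
  have h3 := abs_le.1 (hf _ hc)
  rw [secondDiff, abs_le]
  constructor <;> linarith [h1.1, h1.2, h2.1, h2.2, h3.1, h3.2]

end SecondDiff

theorem abs_secondDiff_secondDiff_sub_le {u : ℝ → ℝ → ℝ} {x y h M₆ M₂ M₄ : ℝ} (hh : 0 ≤ h)
    (hu : ∀ s ∈ closedBall x h, ∀ t ∈ closedBall y h, ContDiffAt ℝ 6 (fun s => u s t) s)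
    (hM₆ : ∀ s ∈ closedBall x h, ∀ t ∈ closedBall y h, |iteratedDeriv 6 (fun s => u s t) s| ≤ M₆)
    (hu₂ : ∀ t ∈ closedBall y h, ContDiffAt ℝ 4 (fun t => iteratedDeriv 2 (fun s => u s t) x) t)
    (hM₂ : ∀ t ∈ closedBall y h,
      |iteratedDeriv 4 (fun t => iteratedDeriv 2 (fun s => u s t) x) t| ≤ M₂)
    (hu₄ : ∀ t ∈ closedBall y h, ContDiffAt ℝ 2 (fun t => iteratedDeriv 4 (fun s => u s t) x) t)
    (hM₄ : ∀ t ∈ closedBall y h,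
      |iteratedDeriv 2 (fun t => iteratedDeriv 4 (fun s => u s t) x) t| ≤ M₄) :
    |secondDiff (fun s => secondDiff (u s) y h) x h
        - h ^ 4 * iteratedDeriv 2 (fun t => iteratedDeriv 2 (fun s => u s t) x) y|
      ≤ (M₆ / 90 + M₂ / 12 + M₄ / 12) * h ^ 6 := by
  have hx : x ∈ closedBall x h := mem_closedBall_self hh
  have hderiv : ∀ k ≤ 6, iteratedDeriv k (fun s => secondDiff (u s) y h) x
      = secondDiff (fun t => iteratedDeriv k (fun s => u s t) x) y h := fun k hk =>
    iteratedDeriv_secondDiff hh fun t ht => (hu x hx t ht).of_le (by exact_mod_cast hk)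
  have E₆ := abs_secondDiff_sub_sub_le_of_iteratedDeriv_six (M := 4 * M₆) hh
    (fun s hs => contDiffAt_secondDiff hh (hu s hs)) fun s hs => by
      rw [iteratedDeriv_secondDiff hh (hu s hs)]
      exact abs_secondDiff_le_four_mul hh (hM₆ s hs)
  rw [hderiv 2 (by norm_num), hderiv 4 (by norm_num)] at E₆
  have E₂ := abs_secondDiff_sub_le_of_iteratedDeriv_four hh hu₂ hM₂
  have E₄ := abs_secondDiff_le_of_iteratedDeriv_two hh hu₄ hM₄
  set D := secondDiff (fun s => secondDiff (u s) y h) x h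
  set D₂ := secondDiff (fun t => iteratedDeriv 2 (fun s => u s t) x) y h
  set D₄ := secondDiff (fun t => iteratedDeriv 4 (fun s => u s t) x) y h
  set m := iteratedDeriv 2 (fun t => iteratedDeriv 2 (fun s => u s t) x) y
  calc |D - h ^ 4 * m|
      = |(D - h ^ 2 * D₂ - h ^ 4 / 12 * D₄) + h ^ 2 * (D₂ - h ^ 2 * m) + h ^ 4 / 12 * D₄| := by
        ring_nf
    _ ≤ |D - h ^ 2 * D₂ - h ^ 4 / 12 * D₄| + h ^ 2 * |D₂ - h ^ 2 * m| + h ^ 4 / 12 * |D₄| := by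
        refine (abs_add_three _ _ _).trans_eq ?_
        rw [abs_mul, abs_mul, abs_of_nonneg (sq_nonneg h),
          abs_of_nonneg (by positivity : (0 : ℝ) ≤ h ^ 4 / 12)]
    _ ≤ 4 * M₆ * h ^ 6 / 360 + h ^ 2 * (M₂ * h ^ 4 / 12) + h ^ 4 / 12 * (M₄ * h ^ 2) := by
        gcongr
    _ = (M₆ / 90 + M₂ / 12 + M₄ / 12) * h ^ 6 := by ring

section Lines

variable {E F : Type*} [NormedAddCommGroup E] [NormedSpace ℝ E] [NormedAddCommGroup F]
  [NormedSpace ℝ F] {f : E → F} {Ω : Set E} {n : WithTop ℕ∞}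

theorem ContDiffOn.iteratedFDeriv_apply (hΩ : IsOpen Ω) {k : ℕ} {m : WithTop ℕ∞}
    (hf : ContDiffOn ℝ n f Ω) (hmk : m + k ≤ n) (w : Fin k → E) :
    ContDiffOn ℝ m (fun q => iteratedFDeriv ℝ k f q w) Ω := fun q hq =>
  ((ContinuousMultilinearMap.apply ℝ (fun _ : Fin k => E) F w).contDiff.contDiffAt.comp q
    ((hf.contDiffAt (hΩ.mem_nhds hq)).iteratedFDeriv_right hmk)).contDiffWithinAt

theorem iteratedDeriv_comp_eq_iteratedFDeriv {c : ℝ → E} {v : E} (hΩ : IsOpen Ω)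
    (hf : ContDiffOn ℝ n f Ω) (hc : ∀ t, HasDerivAt c v t) {k : ℕ} (hk : k ≤ n) {s : ℝ}
    (hs : c s ∈ Ω) :
    iteratedDeriv k (f ∘ c) s = iteratedFDeriv ℝ k f (c s) (fun _ => v) := by
  induction k generalizing s with
  | zero => simp
  | succ k ih =>
    have hc_cont : Continuous c := continuous_iff_continuousAt.2 fun t => (hc t).continuousAt
    have hnear : iteratedDeriv k (f ∘ c) =ᶠ[𝓝 s] fun t => iteratedFDeriv ℝ k f (c t) (fun _ => v) :=
      (hc_cont.continuousAt.eventually_mem (hΩ.mem_nhds hs)).mono fun t ht =>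
        ih (le_trans (by norm_cast; omega) hk) ht
    have hdiff : DifferentiableAt ℝ (iteratedFDeriv ℝ k f) (c s) :=
      (hf.contDiffAt (hΩ.mem_nhds hs)).differentiableAt_iteratedFDeriv
        (lt_of_lt_of_le (by norm_cast; omega) hk)
    rw [iteratedDeriv_succ, hnear.deriv_eq, iteratedFDeriv_succ_apply_left]
    exact ((hdiff.hasFDerivAt.continuousMultilinear_apply_const _).comp_hasDerivAt s (hc s)).deriv

theorem IsCompact.exists_bound_iteratedDeriv_comp {K : Set E} (hK : IsCompact K)
    (hΩ : IsOpen Ω) (hKΩ : K ⊆ Ω) (hf : ContDiffOn ℝ n f Ω) {k : ℕ} (hk : k ≤ n) :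
    ∃ M, ∀ (c : ℝ → E) (v : E) (s : ℝ), (∀ t, HasDerivAt c v t) → ‖v‖ ≤ 1 → c s ∈ K →
      ‖iteratedDeriv k (f ∘ c) s‖ ≤ M := by
  have hcont : ContinuousOn (iteratedFDeriv ℝ k f) K := fun q hq =>
    ((hf.contDiffAt (hΩ.mem_nhds (hKΩ hq))).iteratedFDeriv_right (m := 0)
      (by simpa using hk)).continuousAt.continuousWithinAt
  obtain ⟨M, hM⟩ := hK.exists_bound_of_continuousOn hcont
  refine ⟨M, fun c v s hc hv hs => ?_⟩
  rw [iteratedDeriv_comp_eq_iteratedFDeriv hΩ hf hc hk (hKΩ hs)]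
  simpa using ((iteratedFDeriv ℝ k f (c s)).le_opNorm_mul_prod_of_le fun _ => hv).trans
    (by simpa using hM _ hs)

end Lines

section Slices

variable {u : ℝ → ℝ → ℝ} {Ω : Set (ℝ × ℝ)} {n : WithTop ℕ∞}

theorem iteratedDeriv_slice_eventuallyEq (hΩ : IsOpen Ω) (hu : ContDiffOn ℝ n (uncurry u) Ω)
    {k : ℕ} (hk : k ≤ n) {s t : ℝ} (hst : (s, t) ∈ Ω) :
    (fun t' => iteratedDeriv k (fun s' => u s' t') s) =ᶠ[𝓝 t]
      (fun p => iteratedFDeriv ℝ k (uncurry u) p (fun _ => (1, 0))) ∘ (fun t' => (s, t')) :=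
  ((continuous_const.prodMk continuous_id).continuousAt.eventually_mem (hΩ.mem_nhds hst)).mono
    fun t' ht' => iteratedDeriv_comp_eq_iteratedFDeriv (c := fun s' => (s', t')) hΩ hu
      (fun s' => (hasDerivAt_id s').prodMk (hasDerivAt_const s' t')) hk ht'

theorem contDiffAt_slice_fst (hΩ : IsOpen Ω) (hu : ContDiffOn ℝ n (uncurry u) Ω) {s t : ℝ}
    (hst : (s, t) ∈ Ω) : ContDiffAt ℝ n (fun s' => u s' t) s :=
  (hu.contDiffAt (hΩ.mem_nhds hst)).comp s (contDiffAt_id.prodMk contDiffAt_const)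

theorem contDiffAt_slice_snd (hΩ : IsOpen Ω) (hu : ContDiffOn ℝ n (uncurry u) Ω) {s t : ℝ}
    (hst : (s, t) ∈ Ω) : ContDiffAt ℝ n (fun t' => u s t') t :=
  (hu.contDiffAt (hΩ.mem_nhds hst)).comp t (contDiffAt_const.prodMk contDiffAt_id)

theorem contDiffAt_iteratedDeriv_slice (hΩ : IsOpen Ω) (hu : ContDiffOn ℝ n (uncurry u) Ω)
    {j k : ℕ} (hjk : (j + k : ℕ) ≤ n) {s t : ℝ} (hst : (s, t) ∈ Ω) :
    ContDiffAt ℝ j (fun t' => iteratedDeriv k (fun s' => u s' t') s) t := by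
  have hG := (hu.iteratedFDeriv_apply hΩ (m := j) (k := k) (by exact_mod_cast hjk)
    fun _ => (1, 0)).contDiffAt (hΩ.mem_nhds hst)
  exact (hG.comp t (contDiffAt_const.prodMk contDiffAt_id)).congr_of_eventuallyEq
    (iteratedDeriv_slice_eventuallyEq hΩ hu (le_trans (by exact_mod_cast k.le_add_left j) hjk) hst)

theorem IsCompact.exists_bound_iteratedDeriv_slice {K : Set (ℝ × ℝ)} (hK : IsCompact K)
    (hΩ : IsOpen Ω) (hKΩ : K ⊆ Ω) (hu : ContDiffOn ℝ n (uncurry u) Ω) {j k : ℕ}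
    (hjk : (j + k : ℕ) ≤ n) :
    ∃ M, ∀ s t, (s, t) ∈ K →
      |iteratedDeriv j (fun t' => iteratedDeriv k (fun s' => u s' t') s) t| ≤ M := by
  obtain ⟨M, hM⟩ := hK.exists_bound_iteratedDeriv_comp hΩ hKΩ
    (hu.iteratedFDeriv_apply hΩ (m := j) (k := k) (by exact_mod_cast hjk) fun _ => (1, 0)) le_rfl
  refine ⟨M, fun s t hst => ?_⟩
  rw [(iteratedDeriv_slice_eventuallyEq hΩ hu (le_trans (by exact_mod_cast k.le_add_left j) hjk)
    (hKΩ hst)).iteratedDeriv_eq, ← Real.norm_eq_abs]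
  exact hM _ (0, 1) t (fun t' => (hasDerivAt_const t' s).prodMk (hasDerivAt_id t')) (by simp) hst

theorem IsCompact.exists_abs_secondDiff_fst_sub_le {K : Set (ℝ × ℝ)} (hK : IsCompact K)
    (hΩ : IsOpen Ω) (hKΩ : K ⊆ Ω) (hu : ContDiffOn ℝ 6 (uncurry u) Ω) :
    ∃ C, ∀ x y h, 0 ≤ h → closedBall (x, y) h ⊆ K →
      |secondDiff (fun s => u s y) x h - h ^ 2 * iteratedDeriv 2 (fun s => u s y) x
        - h ^ 4 / 12 * iteratedDeriv 4 (fun s => u s y) x| ≤ C * h ^ 6 := by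
  obtain ⟨M, hM⟩ := hK.exists_bound_iteratedDeriv_slice hΩ hKΩ hu (j := 0) (k := 6) le_rfl
  refine ⟨M / 360, fun x y h hh hbox => ?_⟩
  have hmem : ∀ s ∈ closedBall x h, (s, y) ∈ K := fun s hs =>
    hbox (closedBall_prod_same x y h ▸ mk_mem_prod hs (mem_closedBall_self hh))
  refine (abs_secondDiff_sub_sub_le_of_iteratedDeriv_six hh
    (fun s hs => contDiffAt_slice_fst hΩ hu (hKΩ (hmem s hs)))
    fun s hs => by simpa using hM s y (hmem s hs)).trans_eq (by ring)

theorem IsCompact.exists_abs_secondDiff_snd_sub_le {K : Set (ℝ × ℝ)} (hK : IsCompact K)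
    (hΩ : IsOpen Ω) (hKΩ : K ⊆ Ω) (hu : ContDiffOn ℝ 6 (uncurry u) Ω) :
    ∃ C, ∀ x y h, 0 ≤ h → closedBall (x, y) h ⊆ K →
      |secondDiff (fun t => u x t) y h - h ^ 2 * iteratedDeriv 2 (fun t => u x t) y
        - h ^ 4 / 12 * iteratedDeriv 4 (fun t => u x t) y| ≤ C * h ^ 6 := by
  obtain ⟨M, hM⟩ := hK.exists_bound_iteratedDeriv_slice hΩ hKΩ hu (j := 6) (k := 0) le_rfl
  refine ⟨M / 360, fun x y h hh hbox => ?_⟩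
  have hmem : ∀ t ∈ closedBall y h, (x, t) ∈ K := fun t ht =>
    hbox (closedBall_prod_same x y h ▸ mk_mem_prod (mem_closedBall_self hh) ht)
  refine (abs_secondDiff_sub_sub_le_of_iteratedDeriv_six hh
    (fun t ht => contDiffAt_slice_snd hΩ hu (hKΩ (hmem t ht)))
    fun t ht => by simpa using hM x t (hmem t ht)).trans_eq (by ring)

theorem IsCompact.exists_abs_secondDiff_secondDiff_sub_le {K : Set (ℝ × ℝ)} (hK : IsCompact K)
    (hΩ : IsOpen Ω) (hKΩ : K ⊆ Ω) (hu : ContDiffOn ℝ 6 (uncurry u) Ω) :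
    ∃ C, ∀ x y h, 0 ≤ h → closedBall (x, y) h ⊆ K →
      |secondDiff (fun s => secondDiff (u s) y h) x h
        - h ^ 4 * iteratedDeriv 2 (fun t => iteratedDeriv 2 (fun s => u s t) x) y| ≤ C * h ^ 6 := by
  obtain ⟨M₆, hM₆⟩ := hK.exists_bound_iteratedDeriv_slice hΩ hKΩ hu (j := 0) (k := 6) le_rfl
  obtain ⟨M₂, hM₂⟩ := hK.exists_bound_iteratedDeriv_slice hΩ hKΩ hu (j := 4) (k := 2) le_rfl
  obtain ⟨M₄, hM₄⟩ := hK.exists_bound_iteratedDeriv_slice hΩ hKΩ hu (j := 2) (k := 4) le_rfl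
  refine ⟨M₆ / 90 + M₂ / 12 + M₄ / 12, fun x y h hh hbox => ?_⟩
  have hmem : ∀ s ∈ closedBall x h, ∀ t ∈ closedBall y h, (s, t) ∈ K := fun s hs t ht =>
    hbox (closedBall_prod_same x y h ▸ mk_mem_prod hs ht)
  have hx := mem_closedBall_self (x := x) hh
  refine abs_secondDiff_secondDiff_sub_le hh (fun s hs t ht => ?_) (fun s hs t ht => ?_)
    (fun t ht => ?_) (fun t ht => hM₂ x t (hmem x hx t ht)) (fun t ht => ?_)
    (fun t ht => hM₄ x t (hmem x hx t ht))
  · exact contDiffAt_slice_fst hΩ hu (hKΩ (hmem s hs t ht))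
  · simpa using hM₆ s t (hmem s hs t ht)
  · exact contDiffAt_iteratedDeriv_slice hΩ hu le_rfl (hKΩ (hmem x hx t ht))
  · exact contDiffAt_iteratedDeriv_slice hΩ hu le_rfl (hKΩ (hmem x hx t ht))

end Slices

theorem boxStencil_eq_secondDiff (u : ℝ → ℝ → ℝ) (x y h : ℝ) :
    20 * u x y
      - 4 * (u (x + h) y + u (x - h) y + u x (y + h) + u x (y - h))
      - (u (x + h) (y + h) + u (x + h) (y - h) + u (x - h) (y + h) + u (x - h) (y - h))
    = -6 * (secondDiff (fun s => u s y) x h + secondDiff (fun t => u x t) y h)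
      - secondDiff (fun s => secondDiff (u s) y h) x h := by
  simp only [secondDiff]
  ring

theorem abs_mehrstellen_error_le {Dx Dy Dxy uxx uyy uxxxx uyyyy uxxyy h Cx Cy Cxy : ℝ}
    (hh : 0 < h)
    (hx : |Dx - h ^ 2 * uxx - h ^ 4 / 12 * uxxxx| ≤ Cx * h ^ 6)
    (hy : |Dy - h ^ 2 * uyy - h ^ 4 / 12 * uyyyy| ≤ Cy * h ^ 6)
    (hxy : |Dxy - h ^ 4 * uxxyy| ≤ Cxy * h ^ 6) :
    |1 / (6 * h ^ 2) * (-6 * (Dx + Dy) - Dxy)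
        - (-(uxx + uyy) - h ^ 2 / 12 * (uxxxx + 2 * uxxyy + uyyyy))|
      ≤ (Cx + Cy + Cxy / 6) * h ^ 4 := by
  have hh2 : 0 < h ^ 2 := by positivity
  calc _ = |-((Dx - h ^ 2 * uxx - h ^ 4 / 12 * uxxxx)
            + (Dy - h ^ 2 * uyy - h ^ 4 / 12 * uyyyy)) / h ^ 2
          - (Dxy - h ^ 4 * uxxyy) / (6 * h ^ 2)| := by
          congr 1
          field_simp
          ring
    _ ≤ (Cx * h ^ 6 + Cy * h ^ 6) / h ^ 2 + Cxy * h ^ 6 / (6 * h ^ 2) := by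
          refine (abs_sub _ _).trans (add_le_add ?_ ?_)
          · rw [abs_div, abs_neg, abs_of_pos hh2]
            gcongr
            exact (abs_add_le _ _).trans (add_le_add hx hy)
          · rw [abs_div, abs_of_pos (by positivity : (0 : ℝ) < 6 * h ^ 2)]
            gcongr
    _ = (Cx + Cy + Cxy / 6) * h ^ 4 := by
          field_simp

/-- The 9-point Mehrstellen box stencil satisfies
`(1/(6h²))·(20u − 4·edges − corners) = −Δu − (h²/12)·Δ²u + O(h⁴)`
for `u` of class `C⁶` in a neighborhood of `(x, y)`. -/
theorem mehrstellen_stencil_expansion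
    (u : ℝ → ℝ → ℝ) (x y ε : ℝ) (hε : 0 < ε)
    (hu : ContDiffOn ℝ 6 (fun p : ℝ × ℝ => u p.1 p.2) (Metric.ball (x, y) ε)) :
    ∃ C : ℝ, ∀ h : ℝ, 0 < h → 2 * h < ε →
      |(1 / (6 * h ^ 2)) *
          (20 * u x y
            - 4 * (u (x + h) y + u (x - h) y + u x (y + h) + u x (y - h))
            - (u (x + h) (y + h) + u (x + h) (y - h)
                + u (x - h) (y + h) + u (x - h) (y - h)))
        - (-(lap2 u x y) - (h ^ 2 / 12) * bilap2 u x y)| ≤ C * h ^ 4 := by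
  have hK := isCompact_closedBall (x, y) (ε / 2)
  have hKΩ : closedBall (x, y) (ε / 2) ⊆ ball (x, y) ε := closedBall_subset_ball (by linarith)
  obtain ⟨Cx, hCx⟩ := hK.exists_abs_secondDiff_fst_sub_le isOpen_ball hKΩ hu
  obtain ⟨Cy, hCy⟩ := hK.exists_abs_secondDiff_snd_sub_le isOpen_ball hKΩ hu
  obtain ⟨Cxy, hCxy⟩ := hK.exists_abs_secondDiff_secondDiff_sub_le isOpen_ball hKΩ hu
  refine ⟨Cx + Cy + Cxy / 6, fun h hh hhε => ?_⟩
  have hbox : closedBall (x, y) h ⊆ closedBall (x, y) (ε / 2) :=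
    closedBall_subset_closedBall (by linarith)
  rw [boxStencil_eq_secondDiff, lap2, bilap2]
  exact abs_mehrstellen_error_le hh (hCx x y h hh.le hbox) (hCy x y h hh.le hbox)
    (hCxy x y h hh.le hbox)
end

section
/- If u : ℝ² → ℝ is C⁶ and satisfies −Δu = f for some C⁴ function f, then the Mehrstellen scheme is fourth-order consistent: (1/(6h²))·(20u(x,y) − 4∑_edge u − ∑_corner u) − (1/12)·(8f(x,y) + ∑_edge f) = O(h⁴), where ∑_edge denotes the sum over the four points (x±h,y),(x,y±h) and ∑_corner the sum over (x±h,y±h). -/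
/-!
Write `δₓ`, `δ_y` for the central second differences with step `h`. After substituting
`f = -Δu`, the defect is `Eₓ + E_y`, where `12h²Eₓ = 12h²u_xx - 12δₓu - δₓδ_y u + h²δₓ(Δu)` and
`E_y` is `Eₓ` with the roles of `x` and `y` exchanged. Expanding `δ_y u` to sixth order at the
abscissas `x, x ± h` turns `δₓδ_y u` into `h²δₓu_yy + (h⁴/12)δₓu_yyyy + O(h⁶)`, and `h²δₓu_yy`
cancels exactly against its copy in `h²δₓ(Δu)`. What is left, `12h²Eₓ`, is `O(h⁶)` by the even
Taylor expansions of `u`, `u_xx` and `u_yyyy` along `x`, whose remainders are bounded uniformly on a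
compact square around `(x, y)`; no mixed derivative is needed.
-/

open Set Function Finset Nat

theorem Finset.sum_range_two_mul_mul_add_neg_pow {R : Type*} [CommRing R] (a : ℕ → R) (h : R)
    (m : ℕ) :
    ∑ k ∈ range (2 * m), a k * (h ^ k + (-h) ^ k) = 2 * ∑ k ∈ range m, a (2 * k) * h ^ (2 * k) := by
  induction m with
  | zero => simp
  | succ m ih =>
    rw [show 2 * (m + 1) = 2 * m + 1 + 1 by ring, sum_range_succ, sum_range_succ, ih,
      sum_range_succ, (even_two_mul m).neg_pow, (odd_two_mul_add_one m).neg_pow]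
    ring

theorem abs_sub_taylor_le_of_contDiffAt {g : ℝ → ℝ} {n : ℕ} {c x M : ℝ} (hcx : c ≠ x)
    (hg : ∀ t ∈ uIcc c x, ContDiffAt ℝ (n + 1) g t)
    (hM : ∀ t ∈ uIcc c x, |iteratedDeriv (n + 1) g t| ≤ M) :
    |g x - ∑ k ∈ range (n + 1), iteratedDeriv k g c / k ! * (x - c) ^ k|
      ≤ M * |x - c| ^ (n + 1) / (n + 1)! := by
  obtain ⟨t, ht, hrem⟩ := taylor_mean_remainder_lagrange_iteratedDeriv hcx
    (fun t ht => (hg t ht).contDiffWithinAt)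
  have hpoly : taylorWithinEval g n (uIcc c x) c x
      = ∑ k ∈ range (n + 1), iteratedDeriv k g c / k ! * (x - c) ^ k := by
    rw [taylor_within_apply]
    refine sum_congr rfl fun k hk => ?_
    rw [iteratedDerivWithin_eq_iteratedDeriv (uniqueDiffOn_uIcc hcx)
      ((hg c left_mem_uIcc).of_le (by exact_mod_cast (mem_range.1 hk).le)) left_mem_uIcc,
      smul_eq_mul]
    ring
  rw [← hpoly, hrem, abs_div, abs_mul, abs_pow, Nat.abs_cast]
  gcongr
  exact hM t (Ioo_subset_Icc_self ht)

theorem abs_add_sub_even_taylor_le {g : ℝ → ℝ} {m : ℕ} {c h M : ℝ} (hh : 0 < h)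
    (hg : ∀ t ∈ Icc (c - h) (c + h), ContDiffAt ℝ (2 * m + 2) g t)
    (hM : ∀ t ∈ Icc (c - h) (c + h), |iteratedDeriv (2 * m + 2) g t| ≤ M) :
    |g (c + h) + g (c - h)
        - 2 * ∑ k ∈ range (m + 1), iteratedDeriv (2 * k) g c / (2 * k)! * h ^ (2 * k)|
      ≤ 2 * M * h ^ (2 * m + 2) / (2 * m + 2)! := by
  have taylor : ∀ d, |d| = h →
      |g (c + d) - ∑ k ∈ range (2 * m + 2), iteratedDeriv k g c / k ! * d ^ k|
        ≤ M * h ^ (2 * m + 2) / (2 * m + 2)! := fun d hd => by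
    have hd0 : d ≠ 0 := by rintro rfl; simp at hd; linarith
    have hsub : uIcc c (c + d) ⊆ Icc (c - h) (c + h) := uIcc_subset_Icc
      ⟨by linarith, by linarith⟩ ⟨by linarith [neg_abs_le d], by linarith [le_abs_self d]⟩
    simpa [hd] using abs_sub_taylor_le_of_contDiffAt (n := 2 * m + 1) (x := c + d)
      (by simpa [eq_comm] using hd0) (fun t ht => by exact_mod_cast hg t (hsub ht))
      (fun t ht => hM t (hsub ht))
  have hsum := sum_range_two_mul_mul_add_neg_pow (fun k => iteratedDeriv k g c / k !) h (m + 1)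
  rw [show 2 * (m + 1) = 2 * m + 2 by ring] at hsum
  calc _ = |(g (c + h) - ∑ k ∈ range (2 * m + 2), iteratedDeriv k g c / k ! * h ^ k)
        + (g (c + -h) - ∑ k ∈ range (2 * m + 2), iteratedDeriv k g c / k ! * (-h) ^ k)| := by
          rw [← hsum, ← sub_eq_add_neg]; simp only [mul_add, sum_add_distrib]; ring_nf
    _ ≤ _ := (abs_add_le _ _).trans ((add_le_add (taylor h (abs_of_pos hh))
          (taylor (-h) (by simp [abs_of_pos hh]))).trans_eq (by ring))

/-- Derivatives in `y` are taken as `partialX` of `swap u`. -/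
noncomputable def partialX (u : ℝ → ℝ → ℝ) (a b : ℝ) : ℝ := deriv (fun t => u t b) a

theorem iteratedDeriv_eq_partialX_iterate (u : ℝ → ℝ → ℝ) (n : ℕ) (a b : ℝ) :
    iteratedDeriv n (fun t => u t b) a = partialX^[n] u a b := by
  induction n generalizing a with
  | zero => rfl
  | succ n ih =>
    rw [iteratedDeriv_succ, funext ih, iterate_succ_apply']
    rfl

theorem lap2_eq_partialX_iterate (u : ℝ → ℝ → ℝ) (a b : ℝ) :
    lap2 u a b = partialX^[2] u a b + partialX^[2] (swap u) b a := by
  rw [← iteratedDeriv_eq_partialX_iterate, ← iteratedDeriv_eq_partialX_iterate]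
  rfl

theorem lap2_swap (u : ℝ → ℝ → ℝ) (a b : ℝ) : lap2 (swap u) b a = lap2 u a b :=
  add_comm _ _

theorem ContDiffOn.uncurry_swap {u : ℝ → ℝ → ℝ} {s : Set (ℝ × ℝ)} {n : WithTop ℕ∞}
    (hu : ContDiffOn ℝ n (uncurry u) s) : ContDiffOn ℝ n (uncurry (swap u)) (Prod.swap ⁻¹' s) :=
  hu.comp (contDiff_snd.prodMk contDiff_fst).contDiffOn fun _ hp => hp

theorem ContDiffOn.uncurry_partialX {u : ℝ → ℝ → ℝ} {s : Set (ℝ × ℝ)} {n : WithTop ℕ∞}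
    (hu : ContDiffOn ℝ (n + 1) (uncurry u) s) (hs : IsOpen s) :
    ContDiffOn ℝ n (uncurry (partialX u)) s := by
  refine ((hu.fderiv_of_isOpen hs le_rfl).clm_apply (contDiffOn_const (c := (1, 0)))).congr
    fun p hp => ?_
  have hdiff : DifferentiableAt ℝ (uncurry u) p :=
    (hu.contDiffAt (hs.mem_nhds hp)).differentiableAt (by simp)
  exact (hdiff.hasFDerivAt.comp_hasDerivAt p.1
    ((hasDerivAt_id p.1).prodMk (hasDerivAt_const p.1 p.2))).deriv

theorem ContDiffOn.uncurry_partialX_iterate {u : ℝ → ℝ → ℝ} {s : Set (ℝ × ℝ)} {n k : ℕ}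
    (hu : ContDiffOn ℝ (n + k : ℕ) (uncurry u) s) (hs : IsOpen s) :
    ContDiffOn ℝ n (uncurry (partialX^[k] u)) s := by
  induction k generalizing u with
  | zero => exact hu
  | succ k ih =>
    rw [iterate_succ_apply]
    exact ih (ContDiffOn.uncurry_partialX (by exact_mod_cast hu) hs)

theorem exists_bound_add_sub_even_taylor_partialX {u : ℝ → ℝ → ℝ} {s : Set (ℝ × ℝ)} {m : ℕ}
    (hs : IsOpen s) (hu : ContDiffOn ℝ (2 * m + 2 : ℕ) (uncurry u) s) {x y r : ℝ}
    (hr : Metric.closedBall (x, y) r ⊆ s) :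
    ∃ M, ∀ h, 0 < h → h ≤ r → ∀ b, |b - y| ≤ r →
      |u (x + h) b + u (x - h) b
          - 2 * ∑ k ∈ range (m + 1), partialX^[2 * k] u x b / (2 * k)! * h ^ (2 * k)|
        ≤ M * h ^ (2 * m + 2) := by
  obtain ⟨B, hB⟩ := (isCompact_closedBall (x, y) r).exists_bound_of_continuousOn
    ((ContDiffOn.uncurry_partialX_iterate (n := 0) (k := 2 * m + 2) (by rwa [zero_add])
      hs).continuousOn.mono hr)
  refine ⟨2 * B / (2 * m + 2)!, fun h hh hhr b hb => ?_⟩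
  have hmem : ∀ t ∈ Icc (x - h) (x + h), (t, b) ∈ Metric.closedBall (x, y) r := fun t ht => by
    rw [Metric.mem_closedBall, Prod.dist_eq, Real.dist_eq, Real.dist_eq]
    exact max_le (abs_le.2 ⟨by linarith [ht.1], by linarith [ht.2]⟩) hb
  have htaylor := abs_add_sub_even_taylor_le (g := fun t => u t b) (M := B) hh
    (fun t ht => by
      have := (hu.contDiffAt (hs.mem_nhds (hr (hmem t ht)))).comp t
        (contDiffAt_id.prodMk contDiffAt_const)
      exact_mod_cast this)
    (fun t ht => by
      rw [iteratedDeriv_eq_partialX_iterate, ← Real.norm_eq_abs]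
      exact hB _ (hmem t ht))
  simp only [iteratedDeriv_eq_partialX_iterate] at htaylor
  exact htaylor.trans_eq (by ring)

theorem Prod.swap_preimage_closedBall {α β : Type*} [PseudoMetricSpace α] [PseudoMetricSpace β]
    (a : α) (b : β) (r : ℝ) :
    Prod.swap ⁻¹' Metric.closedBall (a, b) r = Metric.closedBall (b, a) r := by
  ext p
  simp only [Set.mem_preimage, Metric.mem_closedBall, Prod.dist_eq, Prod.fst_swap, Prod.snd_swap,
    max_comm]

theorem exists_bound_mehrstellen_x_part {u : ℝ → ℝ → ℝ} {s : Set (ℝ × ℝ)} (hs : IsOpen s)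
    (hu : ContDiffOn ℝ 6 (uncurry u) s) {x y r : ℝ} (hr : Metric.closedBall (x, y) r ⊆ s) :
    ∃ C, ∀ h, 0 < h → h ≤ r →
      |12 * h ^ 2 * iteratedDeriv 2 (fun t => u t y) x
        - 12 * (u (x + h) y - 2 * u x y + u (x - h) y)
        - (u (x + h) (y + h) + u (x + h) (y - h) + u (x - h) (y + h) + u (x - h) (y - h)
          - 2 * (u (x + h) y + u (x - h) y + u x (y + h) + u x (y - h)) + 4 * u x y)
        + h ^ 2 * (lap2 u (x + h) y - 2 * lap2 u x y + lap2 u (x - h) y)| ≤ C * h ^ 6 := by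
  have hs' : IsOpen (Prod.swap ⁻¹' s) := hs.preimage continuous_swap
  have hr' : Metric.closedBall (y, x) r ⊆ Prod.swap ⁻¹' s := by
    rw [← Prod.swap_preimage_closedBall]; exact preimage_mono hr
  have hu' : ContDiffOn ℝ 6 (uncurry (swap u)) (Prod.swap ⁻¹' s) := hu.uncurry_swap
  obtain ⟨C₁, hC₁⟩ := exists_bound_add_sub_even_taylor_partialX (m := 2) hs hu hr
  obtain ⟨C₂, hC₂⟩ := exists_bound_add_sub_even_taylor_partialX (m := 2) hs' hu' hr'
  obtain ⟨C₃, hC₃⟩ := exists_bound_add_sub_even_taylor_partialX (m := 1) hs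
    (ContDiffOn.uncurry_partialX_iterate (k := 2) hu hs) hr
  obtain ⟨C₄, hC₄⟩ := exists_bound_add_sub_even_taylor_partialX (m := 0)
    (u := swap (partialX^[4] (swap u))) hs
    (by simpa [preimage_preimage] using
      (ContDiffOn.uncurry_partialX_iterate (k := 4) hu' hs').uncurry_swap) hr
  refine ⟨12 * C₁ + 4 * C₂ + C₃ + C₄ / 12, fun h hh hhr => ?_⟩
  have hy : |y - y| ≤ r := by simpa using hh.le.trans hhr
  have R := abs_le.1 (hC₁ h hh hhr y hy)
  have S₀ := abs_le.1 (hC₂ h hh hhr x (by simpa using hh.le.trans hhr))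
  have S₁ := abs_le.1 (hC₂ h hh hhr (x + h) (by simpa [abs_of_pos hh] using hhr))
  have S₂ := abs_le.1 (hC₂ h hh hhr (x - h) (by simpa [abs_of_pos hh] using hhr))
  have Q := abs_le.1 (hC₃ h hh hhr y hy)
  have W := abs_le.1 (hC₄ h hh hhr y hy)
  rw [lap2_eq_partialX_iterate, lap2_eq_partialX_iterate, lap2_eq_partialX_iterate,
    iteratedDeriv_eq_partialX_iterate, abs_le]
  simp only [sum_range_succ, sum_range_zero, reduceMul, reduceAdd, mul_zero, mul_one, zero_add,
    pow_zero, div_one, factorial, cast_one, iterate_zero, iterate_succ, id_eq,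
    comp_apply, swap] at R S₀ S₁ S₂ Q W ⊢
  have hh2 : 0 ≤ h ^ 2 := by positivity
  have hh4 : 0 ≤ h ^ 4 / 12 := by positivity
  constructor
  · linarith [mul_le_mul_of_nonneg_left Q.1 hh2, mul_le_mul_of_nonneg_left W.2 hh4]
  · linarith [mul_le_mul_of_nonneg_left Q.2 hh2, mul_le_mul_of_nonneg_left W.1 hh4]

theorem mehrstellen_fourth_order_consistency_general
    (u f : ℝ → ℝ → ℝ) (x y ε : ℝ) (hε : 0 < ε)
    (hu : ContDiffOn ℝ 6 (fun p : ℝ × ℝ => u p.1 p.2) (Metric.ball (x, y) ε))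
    (hpde : ∀ a b : ℝ, (a, b) ∈ Metric.ball (x, y) ε → -(lap2 u a b) = f a b) :
    ∃ C : ℝ, ∀ h : ℝ, 0 < h → 2 * h < ε →
      |(1 / (6 * h ^ 2)) *
          (20 * u x y
            - 4 * (u (x + h) y + u (x - h) y + u x (y + h) + u x (y - h))
            - (u (x + h) (y + h) + u (x + h) (y - h)
                + u (x - h) (y + h) + u (x - h) (y - h)))
        - (1 / 12) * (8 * f x y + f (x + h) y + f (x - h) y
            + f x (y + h) + f x (y - h))| ≤ C * h ^ 4 := by
  have hball : Metric.closedBall (x, y) (ε / 2) ⊆ Metric.ball (x, y) ε :=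
    Metric.closedBall_subset_ball (by linarith)
  obtain ⟨C₁, hC₁⟩ := exists_bound_mehrstellen_x_part Metric.isOpen_ball hu hball
  obtain ⟨C₂, hC₂⟩ := exists_bound_mehrstellen_x_part
    (Metric.isOpen_ball.preimage continuous_swap) (ContDiffOn.uncurry_swap hu)
    (by rw [← Prod.swap_preimage_closedBall]; exact preimage_mono hball)
  refine ⟨(C₁ + C₂) / 12, fun h hh hhε => ?_⟩
  have hf : ∀ a b, |a - x| ≤ h → |b - y| ≤ h → f a b = -lap2 u a b := fun a b ha hb =>
    (hpde a b (by
      rw [Metric.mem_ball, Prod.dist_eq, Real.dist_eq, Real.dist_eq]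
      exact max_lt (by linarith) (by linarith))).symm
  have hsum := (abs_add_le _ _).trans
    (add_le_add (hC₁ h hh (by linarith)) (hC₂ h hh (by linarith)))
  simp only [swap, lap2_swap] at hsum
  have h12 : 0 < 12 * h ^ 2 := by positivity
  rw [hf x y, hf (x + h) y, hf (x - h) y, hf x (y + h), hf x (y - h),
    ← mul_le_mul_iff_of_pos_left h12]
  · nth_rewrite 1 [← abs_of_pos h12]
    rw [← abs_mul]
    refine (le_of_eq ?_).trans (hsum.trans_eq (by ring))
    congr 1
    unfold lap2
    field_simp
    ring
  all_goals simp [abs_of_pos hh, hh.le]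

/-- Fourth-order consistency of the Mehrstellen scheme: if `u` is `C⁶`, `f` is
`C⁴` and `−Δu = f` near `(x, y)`, then
`(1/(6h²))·(20u − 4∑_edge u − ∑_corner u) − (1/12)·(8f + ∑_edge f) = O(h⁴)`. -/
theorem mehrstellen_fourth_order_consistency
    (u f : ℝ → ℝ → ℝ) (x y ε : ℝ) (hε : 0 < ε)
    (hu : ContDiffOn ℝ 6 (fun p : ℝ × ℝ => u p.1 p.2) (Metric.ball (x, y) ε))
    (hf : ContDiffOn ℝ 4 (fun p : ℝ × ℝ => f p.1 p.2) (Metric.ball (x, y) ε))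
    (hpde : ∀ a b : ℝ, (a, b) ∈ Metric.ball (x, y) ε → -(lap2 u a b) = f a b) :
    ∃ C : ℝ, ∀ h : ℝ, 0 < h → 2 * h < ε →
      |(1 / (6 * h ^ 2)) *
          (20 * u x y
            - 4 * (u (x + h) y + u (x - h) y + u x (y + h) + u x (y - h))
            - (u (x + h) (y + h) + u (x + h) (y - h)
                + u (x - h) (y + h) + u (x - h) (y - h)))
        - (1 / 12) * (8 * f x y + f (x + h) y + f (x - h) y
            + f x (y + h) + f x (y - h))| ≤ C * h ^ 4 :=
  mehrstellen_fourth_order_consistency_general u f x y ε hε hu hpde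
end
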